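/- Consider the diagonal action of SL(2,ℂ) on ℙ² × ℙ², where ℙ² is the projectivization of symmetric 2×2 complex matrices with the action g·[M] := [g M gᵀ]. The stabilizer of the point ([I], [σ]), where σ = [[0,1],[1,0]] (in homogeneous coordinates, ([1:0:1],[0:1:0])), is the subgroup of order 8 generated by the matrices [[i,0],[0,−i]] and [[0,i],[i,0]]; it is isomorphic to the quaternion group Q₈ (the binary dihedral group of order 8). -/
import Mathlib


open Matrix

/-- The matrix `[[i,0],[0,−i]]` as an element of `SL(2,ℂ)`. -/
noncomputable def genA : Matrix.SpecialLinearGroup (Fin 2) ℂ :=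
  ⟨!![Complex.I, 0; 0, -Complex.I], by
    norm_num [Matrix.det_fin_two_of, Complex.I_mul_I]⟩

/-- The matrix `[[0,i],[i,0]]` as an element of `SL(2,ℂ)`. -/
noncomputable def genB : Matrix.SpecialLinearGroup (Fin 2) ℂ :=
  ⟨!![0, Complex.I; Complex.I, 0], by
    norm_num [Matrix.det_fin_two_of, Complex.I_mul_I]⟩

/-- The symmetric matrix `σ = [[0,1],[1,0]]`, i.e. the point `[0:1:0] ∈ ℙ²`. -/
def sigmaMat : Matrix (Fin 2) (Fin 2) ℂ := !![0, 1; 1, 0]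

/-- `g` stabilizes the point `([I], [σ]) ∈ ℙ² × ℙ²` for the diagonal action
`g·[M] = [g M gᵀ]` on projectivized symmetric `2×2` matrices. -/
def stabilizesIσ (g : Matrix.SpecialLinearGroup (Fin 2) ℂ) : Prop :=
  (∃ a : ℂ, a ≠ 0 ∧
    (g : Matrix (Fin 2) (Fin 2) ℂ) * 1 * (g : Matrix (Fin 2) (Fin 2) ℂ)ᵀ =
      a • (1 : Matrix (Fin 2) (Fin 2) ℂ)) ∧
  (∃ b : ℂ, b ≠ 0 ∧
    (g : Matrix (Fin 2) (Fin 2) ℂ) * sigmaMat * (g : Matrix (Fin 2) (Fin 2) ℂ)ᵀ = b • sigmaMat)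


lemma tfin {α : Type*} (a b c d : α) : (!![a,b;c,d])ᵀ = !![a,c;b,d] := by
  ext i j; fin_cases i <;> fin_cases j <;> rfl

lemma m2_ext {α : Type*} {a b c d e f g h : α} (H : !![a,b;c,d] = !![e,f;g,h]) :
    a = e ∧ b = f ∧ c = g ∧ d = h :=
  ⟨congrFun (congrFun H 0) 0, congrFun (congrFun H 0) 1,
   congrFun (congrFun H 1) 0, congrFun (congrFun H 1) 1⟩

lemma smul_sigma (b : ℂ) : b • (!![0,1;1,0] : Matrix (Fin 2) (Fin 2) ℂ) = !![0,b;b,0] := by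
  rw [Matrix.smul_of]
  ext i j; fin_cases i <;> fin_cases j <;> simp

lemma smul_one_fin_two (a : ℂ) : a • (1 : Matrix (Fin 2) (Fin 2) ℂ) = !![a,0;0,a] := by
  rw [Matrix.one_fin_two, Matrix.smul_of]
  ext i j; fin_cases i <;> fin_cases j <;> simp


lemma classify (g : Matrix.SpecialLinearGroup (Fin 2) ℂ) (h : stabilizesIσ g) :
    (g : Matrix (Fin 2) (Fin 2) ℂ) = !![1,0;0,1] ∨
    (g : Matrix (Fin 2) (Fin 2) ℂ) = !![-1,0;0,-1] ∨
    (g : Matrix (Fin 2) (Fin 2) ℂ) = !![Complex.I,0;0,-Complex.I] ∨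
    (g : Matrix (Fin 2) (Fin 2) ℂ) = !![-Complex.I,0;0,Complex.I] ∨
    (g : Matrix (Fin 2) (Fin 2) ℂ) = !![0,Complex.I;Complex.I,0] ∨
    (g : Matrix (Fin 2) (Fin 2) ℂ) = !![0,-Complex.I;-Complex.I,0] ∨
    (g : Matrix (Fin 2) (Fin 2) ℂ) = !![0,1;-1,0] ∨
    (g : Matrix (Fin 2) (Fin 2) ℂ) = !![0,-1;1,0] := by
  obtain ⟨⟨a, ha0, ha⟩, ⟨b, hb0, hb⟩⟩ := h
  rw [mul_one] at ha
  set p := (g : Matrix (Fin 2) (Fin 2) ℂ) 0 0 with hp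
  set q := (g : Matrix (Fin 2) (Fin 2) ℂ) 0 1 with hq
  set r := (g : Matrix (Fin 2) (Fin 2) ℂ) 1 0 with hr
  set s := (g : Matrix (Fin 2) (Fin 2) ℂ) 1 1 with hs
  have hM : (g : Matrix (Fin 2) (Fin 2) ℂ) = !![p, q; r, s] := Matrix.eta_fin_two _
  have hdet : p * s - q * r = 1 := by
    have := g.prop
    rw [Matrix.det_fin_two] at this
    exact this
  rw [hM, tfin, Matrix.mul_fin_two, smul_one_fin_two] at ha
  rw [hM, tfin, sigmaMat, Matrix.mul_fin_two, Matrix.mul_fin_two, smul_sigma] at hb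
  obtain ⟨f00, f01, -, f11⟩ := m2_ext ha
  obtain ⟨e00, e01, -, e11⟩ := m2_ext hb
  have hpq : p * q = 0 := by linear_combination e00 / 2
  have hrs : r * s = 0 := by linear_combination e11 / 2
  rw [hM]
  rcases mul_eq_zero.mp hpq with hp0 | hq0
  · -- p = 0 : antidiagonal case
    have hqr : q * r = -1 := by linear_combination -hdet + s * hp0
    have hrne : r ≠ 0 := by
      intro h; rw [h, mul_zero] at hqr
      exact absurd hqr.symm (by norm_num)
    have hs0 : s = 0 := (mul_eq_zero.mp hrs).resolve_left hrne
    have hq2r2 : q * q = r * r := by linear_combination f00 - f11 - p * hp0 + s * hs0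
    have hr4 : r ^ 4 = 1 := by linear_combination (q * r - 1) * hqr - r ^ 2 * hq2r2
    have hfac : (r - 1) * ((r + 1) * ((r - Complex.I) * (r + Complex.I))) = 0 := by
      linear_combination hr4 - (r ^ 2 - 1) * Complex.I_sq
    rcases mul_eq_zero.mp hfac with h | h
    · have hrv : r = 1 := by linear_combination h
      have hqv : q = -1 := by linear_combination hqr - q * hrv
      rw [hp0, hs0, hqv, hrv]
      exact .inr (.inr (.inr (.inr (.inr (.inr (.inr rfl))))))
    rcases mul_eq_zero.mp h with h | h
    · have hrv : r = -1 := by linear_combination h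
      have hqv : q = 1 := by linear_combination -hqr + q * hrv
      rw [hp0, hs0, hqv, hrv]
      exact .inr (.inr (.inr (.inr (.inr (.inr (.inl rfl))))))
    rcases mul_eq_zero.mp h with h | h
    · have hrv : r = Complex.I := by linear_combination h
      have hqv : q = Complex.I := by
        linear_combination -Complex.I * hqr + q * Complex.I * hrv + q * Complex.I_sq
      rw [hp0, hs0, hqv, hrv]
      exact .inr (.inr (.inr (.inr (.inl rfl))))
    · have hrv : r = -Complex.I := by linear_combination h
      have hqv : q = -Complex.I := by
        linear_combination Complex.I * hqr - q * Complex.I * hrv + q * Complex.I_sq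
      rw [hp0, hs0, hqv, hrv]
      exact .inr (.inr (.inr (.inr (.inr (.inl rfl)))))
  · -- q = 0 : diagonal case
    have hps : p * s = 1 := by linear_combination hdet + r * hq0
    have hsne : s ≠ 0 := by
      intro h; rw [h, mul_zero] at hps; exact one_ne_zero hps.symm
    have hr0 : r = 0 := (mul_eq_zero.mp hrs).resolve_right hsne
    have hp2s2 : p * p = s * s := by linear_combination f00 - f11 - q * hq0 + r * hr0
    have hs4 : s ^ 4 = 1 := by linear_combination (p * s + 1) * hps - s ^ 2 * hp2s2
    have hfac : (s - 1) * ((s + 1) * ((s - Complex.I) * (s + Complex.I))) = 0 := by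
      linear_combination hs4 - (s ^ 2 - 1) * Complex.I_sq
    rcases mul_eq_zero.mp hfac with h | h
    · have hsv : s = 1 := by linear_combination h
      have hpv : p = 1 := by linear_combination hps - p * hsv
      rw [hq0, hr0, hpv, hsv]
      exact .inl rfl
    rcases mul_eq_zero.mp h with h | h
    · have hsv : s = -1 := by linear_combination h
      have hpv : p = -1 := by linear_combination -hps + p * hsv
      rw [hq0, hr0, hpv, hsv]
      exact .inr (.inl rfl)
    rcases mul_eq_zero.mp h with h | h
    · have hsv : s = Complex.I := by linear_combination h
      have hpv : p = -Complex.I := by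
        linear_combination -Complex.I * hps + p * Complex.I * hsv + p * Complex.I_sq
      rw [hq0, hr0, hpv, hsv]
      exact .inr (.inr (.inr (.inl rfl)))
    · have hsv : s = -Complex.I := by linear_combination h
      have hpv : p = Complex.I := by
        linear_combination Complex.I * hps - p * Complex.I * hsv + p * Complex.I_sq
      rw [hq0, hr0, hpv, hsv]
      exact .inr (.inr (.inl rfl))

local notation "SL2" => Matrix.SpecialLinearGroup (Fin 2) ℂ

lemma sigma_inv : sigmaMat * sigmaMat = 1 := by
  simp [sigmaMat, Matrix.mul_fin_two, Matrix.one_fin_two]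

/-- stabilizers form a subgroup -/
def stabSG : Subgroup (Matrix.SpecialLinearGroup (Fin 2) ℂ) where
  carrier := {g | stabilizesIσ g}
  one_mem' := by
    refine ⟨⟨1, one_ne_zero, by simp⟩, ⟨1, one_ne_zero, by simp⟩⟩
  mul_mem' := by
    rintro g h ⟨⟨a, ha0, ha⟩, ⟨b, hb0, hb⟩⟩ ⟨⟨a', ha0', ha'⟩, ⟨b', hb0', hb'⟩⟩
    rw [mul_one] at ha ha'
    refine ⟨⟨a * a', mul_ne_zero ha0 ha0', ?_⟩, ⟨b * b', mul_ne_zero hb0 hb0', ?_⟩⟩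
    · rw [mul_one, Matrix.SpecialLinearGroup.coe_mul, Matrix.transpose_mul]
      calc (g : Matrix (Fin 2) (Fin 2) ℂ) * (h : Matrix (Fin 2) (Fin 2) ℂ) *
            ((h : Matrix (Fin 2) (Fin 2) ℂ)ᵀ * (g : Matrix (Fin 2) (Fin 2) ℂ)ᵀ)
          = (g : Matrix (Fin 2) (Fin 2) ℂ) *
              ((h : Matrix (Fin 2) (Fin 2) ℂ) * (h : Matrix (Fin 2) (Fin 2) ℂ)ᵀ) *
              (g : Matrix (Fin 2) (Fin 2) ℂ)ᵀ := by simp only [mul_assoc]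
        _ = (a * a') • 1 := by
            rw [ha', Matrix.mul_smul, Matrix.smul_mul, mul_one, ha, smul_smul, mul_comm a' a]
    · rw [Matrix.SpecialLinearGroup.coe_mul, Matrix.transpose_mul]
      calc (g : Matrix (Fin 2) (Fin 2) ℂ) * (h : Matrix (Fin 2) (Fin 2) ℂ) * sigmaMat *
            ((h : Matrix (Fin 2) (Fin 2) ℂ)ᵀ * (g : Matrix (Fin 2) (Fin 2) ℂ)ᵀ)
          = (g : Matrix (Fin 2) (Fin 2) ℂ) *
              ((h : Matrix (Fin 2) (Fin 2) ℂ) * sigmaMat * (h : Matrix (Fin 2) (Fin 2) ℂ)ᵀ) *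
              (g : Matrix (Fin 2) (Fin 2) ℂ)ᵀ := by simp only [mul_assoc]
        _ = (b * b') • sigmaMat := by
            rw [hb', Matrix.mul_smul, Matrix.smul_mul, hb, smul_smul, mul_comm b' b]
  inv_mem' := by
    rintro g ⟨⟨a, ha0, ha⟩, ⟨b, hb0, hb⟩⟩
    rw [mul_one] at ha
    set M := (g : Matrix (Fin 2) (Fin 2) ℂ) with hM
    set N := ((g⁻¹ : SL2) : Matrix (Fin 2) (Fin 2) ℂ) with hN
    have hNM : N * M = 1 := by
      rw [hN, hM, ← Matrix.SpecialLinearGroup.coe_mul, inv_mul_cancel,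
        Matrix.SpecialLinearGroup.coe_one]
    have hMN : M * N = 1 := by
      rw [hN, hM, ← Matrix.SpecialLinearGroup.coe_mul, mul_inv_cancel,
        Matrix.SpecialLinearGroup.coe_one]
    have hMTNT : Mᵀ * Nᵀ = 1 := by rw [← Matrix.transpose_mul, hNM, Matrix.transpose_one]
    have h1 : (1 : Matrix (Fin 2) (Fin 2) ℂ) = a⁻¹ • (M * Mᵀ) := by
      rw [ha, smul_smul, inv_mul_cancel₀ ha0, one_smul]
    have hs : sigmaMat = b⁻¹ • (M * sigmaMat * Mᵀ) := by
      rw [hb, smul_smul, inv_mul_cancel₀ hb0, one_smul]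
    refine ⟨⟨a⁻¹, inv_ne_zero ha0, ?_⟩, ⟨b⁻¹, inv_ne_zero hb0, ?_⟩⟩
    · rw [mul_one]
      calc N * Nᵀ = N * (a⁻¹ • (M * Mᵀ)) * Nᵀ := by rw [← h1, mul_one]
        _ = a⁻¹ • (N * M * (Mᵀ * Nᵀ)) := by
            rw [Matrix.mul_smul, Matrix.smul_mul]; simp only [mul_assoc]
        _ = a⁻¹ • 1 := by rw [hNM, hMTNT, one_mul]
    · calc N * sigmaMat * Nᵀ = N * (b⁻¹ • (M * sigmaMat * Mᵀ)) * Nᵀ := by rw [← hs]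
        _ = b⁻¹ • (N * M * sigmaMat * (Mᵀ * Nᵀ)) := by
            rw [Matrix.mul_smul, Matrix.smul_mul]; simp only [mul_assoc]
        _ = b⁻¹ • sigmaMat := by rw [hNM, hMTNT, one_mul, mul_one]

lemma hA4 : genA ^ 4 = 1 := by
  apply Subtype.ext
  show (genA ^ 4 : Matrix.SpecialLinearGroup (Fin 2) ℂ).val = 1
  rw [Matrix.SpecialLinearGroup.coe_pow]
  simp [genA, pow_succ, Matrix.mul_fin_two, Matrix.one_fin_two]

lemma hBB : genB ^ 2 = genA ^ 2 := by
  apply Subtype.ext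
  rw [Matrix.SpecialLinearGroup.coe_pow, Matrix.SpecialLinearGroup.coe_pow]
  simp [genA, genB, pow_succ, Matrix.mul_fin_two]

lemma hAB : genA * genB = genB * genA ^ 3 := by
  apply Subtype.ext
  rw [Matrix.SpecialLinearGroup.coe_mul, Matrix.SpecialLinearGroup.coe_mul,
    Matrix.SpecialLinearGroup.coe_pow]
  simp [genA, genB, pow_succ, Matrix.mul_fin_two]

noncomputable def Hgrp : Subgroup (Matrix.SpecialLinearGroup (Fin 2) ℂ) :=
  Subgroup.closure {genA, genB}

lemma memA : genA ∈ Hgrp := Subgroup.subset_closure (Set.mem_insert _ _)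
lemma memB : genB ∈ Hgrp := Subgroup.subset_closure (Set.mem_insert_of_mem _ rfl)

noncomputable def A' : Hgrp := ⟨genA, memA⟩
noncomputable def B' : Hgrp := ⟨genB, memB⟩

lemma hA4' : A' ^ 4 = 1 := by
  apply Subtype.ext
  show ((A' ^ 4 : Hgrp) : Matrix.SpecialLinearGroup (Fin 2) ℂ) = 1
  rw [SubgroupClass.coe_pow]
  exact hA4

lemma hBB' : B' ^ 2 = A' ^ 2 := by
  apply Subtype.ext
  show ((B' ^ 2 : Hgrp) : _) = ((A' ^ 2 : Hgrp) : Matrix.SpecialLinearGroup (Fin 2) ℂ)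
  rw [SubgroupClass.coe_pow, SubgroupClass.coe_pow]
  exact hBB

lemma hAB' : A' * B' = B' * A' ^ 3 := by
  apply Subtype.ext
  show ((A' * B' : Hgrp) : _) = ((B' * A' ^ 3 : Hgrp) : Matrix.SpecialLinearGroup (Fin 2) ℂ)
  push_cast [SubgroupClass.coe_pow]
  exact hAB

lemma pow_mod4 (m : ℕ) : A' ^ (m % 4) = A' ^ m := by
  conv_rhs => rw [← Nat.div_add_mod m 4]
  rw [pow_add, pow_mul, hA4', one_pow, one_mul]

lemma pw_eq {m k : ℕ} (h : (m : ZMod 4) = (k : ZMod 4)) : A' ^ m = A' ^ k := by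
  rw [← pow_mod4 m, ← pow_mod4 k, (ZMod.natCast_eq_natCast_iff m k 4).mp h]

noncomputable def pw (i : ZMod 4) : Hgrp := A' ^ i.val

lemma pw_natCast (m : ℕ) : pw (m : ZMod 4) = A' ^ m := by
  apply pw_eq
  push_cast [pw, ZMod.natCast_val, ZMod.cast_id]
  rfl

lemma pw_add (i j : ZMod 4) : pw (i + j) = pw i * pw j := by
  rw [pw, pw, pw, ← pow_add]
  apply pw_eq
  push_cast [ZMod.natCast_val, ZMod.cast_id]
  revert i j; decide

lemma AmB (m : ℕ) : A' ^ m * B' = B' * A' ^ (3 * m) := by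
  induction m with
  | zero => simp
  | succ n ih =>
    rw [pow_succ, mul_assoc, hAB', ← mul_assoc, ih, mul_assoc, ← pow_add]
    ring_nf

noncomputable def qmap : QuaternionGroup 2 → Hgrp
  | .a i => pw i
  | .xa i => B' * pw i

lemma qmap_mul (x y : QuaternionGroup 2) : qmap (x * y) = qmap x * qmap y := by
  rcases x with i | i <;> rcases y with j | j
  · show qmap (.a (i + j)) = _
    show pw (i + j) = pw i * pw j
    exact pw_add i j
  · show qmap (.xa (j - i)) = _
    show B' * pw (j - i) = pw i * (B' * pw j)
    rw [pw, pw, pw, ← mul_assoc, AmB, mul_assoc, ← pow_add]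
    congr 1
    apply pw_eq
    push_cast [ZMod.natCast_val, ZMod.cast_id]
    revert i j; decide
  · show qmap (.xa (i + j)) = _
    show B' * pw (i + j) = B' * pw i * pw j
    rw [pw_add, mul_assoc]
  · show qmap (.a (2 + j - i)) = _
    show pw (2 + j - i) = B' * pw i * (B' * pw j)
    rw [pw, pw, pw, mul_assoc B' (A' ^ i.val) (B' * A' ^ j.val),
      ← mul_assoc (A' ^ i.val) B' (A' ^ j.val), AmB]
    simp only [← mul_assoc]
    rw [show B' * B' = A' ^ 2 by rw [← pow_two]; exact hBB', ← pow_add, ← pow_add]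
    apply pw_eq
    push_cast [ZMod.natCast_val, ZMod.cast_id]
    revert i j; decide

-- coercion value computations
lemma W2 : ((genA ^ 2 : Matrix.SpecialLinearGroup (Fin 2) ℂ) : Matrix (Fin 2) (Fin 2) ℂ)
    = !![-1,0;0,-1] := by
  rw [Matrix.SpecialLinearGroup.coe_pow]
  simp [genA, pow_succ, Matrix.mul_fin_two, Complex.I_mul_I]
lemma W3 : ((genA ^ 3 : Matrix.SpecialLinearGroup (Fin 2) ℂ) : Matrix (Fin 2) (Fin 2) ℂ)
    = !![-Complex.I,0;0,Complex.I] := by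
  rw [Matrix.SpecialLinearGroup.coe_pow]
  simp [genA, pow_succ, Matrix.mul_fin_two, Complex.I_mul_I]
lemma W5 : ((genB * genA ^ 2 : Matrix.SpecialLinearGroup (Fin 2) ℂ) : Matrix (Fin 2) (Fin 2) ℂ)
    = !![0,-Complex.I;-Complex.I,0] := by
  rw [Matrix.SpecialLinearGroup.coe_mul, W2]
  simp [genB, Matrix.mul_fin_two]
lemma W6 : ((genB * genA : Matrix.SpecialLinearGroup (Fin 2) ℂ) : Matrix (Fin 2) (Fin 2) ℂ)
    = !![0,1;-1,0] := by
  rw [Matrix.SpecialLinearGroup.coe_mul]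
  simp [genA, genB, Matrix.mul_fin_two, Complex.I_mul_I]
lemma W7 : ((genB * genA ^ 3 : Matrix.SpecialLinearGroup (Fin 2) ℂ) : Matrix (Fin 2) (Fin 2) ℂ)
    = !![0,-1;1,0] := by
  rw [Matrix.SpecialLinearGroup.coe_mul, W3]
  simp [genB, Matrix.mul_fin_two, Complex.I_mul_I]

noncomputable def qhom : QuaternionGroup 2 →* Hgrp := MonoidHom.mk' qmap qmap_mul

lemma qhom_inj : Function.Injective qhom := by
  rw [injective_iff_map_eq_one]
  rintro (i | i) h
  · -- h : pw i = 1
    have hval : ((A' ^ i.val : Hgrp) : Matrix.SpecialLinearGroup (Fin 2) ℂ) = 1 :=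
      congrArg _ h
    rw [SubgroupClass.coe_pow] at hval
    have hv4 : i.val < 4 := i.val_lt
    have hval' : genA ^ i.val = 1 := hval
    interval_cases hc : i.val
    · have : i = 0 := (ZMod.val_eq_zero i).mp hc
      rw [this]; rfl
    · rw [pow_one] at hval'
      have := congrFun (congrFun (congrArg Subtype.val hval') 0) 0
      simp [genA, Matrix.one_apply, Complex.ext_iff] at this
    · have := congrFun (congrFun (W2.symm.trans (congrArg Subtype.val hval')) 0) 0
      simp [Matrix.one_apply] at this
      exact absurd this (by norm_num)
    · have := congrFun (congrFun (W3.symm.trans (congrArg Subtype.val hval')) 0) 0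
      simp [Matrix.one_apply, Complex.ext_iff] at this
  · -- h : B' * pw i = 1
    exfalso
    have hval : genB * genA ^ i.val = 1 := by
      have := congrArg (Subtype.val) h
      push_cast [SubgroupClass.coe_pow] at this
      exact this
    have h00 := congrFun (congrFun (congrArg Subtype.val hval) 0) 0
    have hAd : ∀ k : ℕ, ((genA ^ k : Matrix.SpecialLinearGroup (Fin 2) ℂ) :
        Matrix (Fin 2) (Fin 2) ℂ) = !![Complex.I ^ k, 0; 0, (-Complex.I) ^ k] := by
      intro k
      induction k with
      | zero => simp [Matrix.one_fin_two]
      | succ m ih =>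
        rw [pow_succ, Matrix.SpecialLinearGroup.coe_mul, ih]
        simp [genA, Matrix.mul_fin_two, pow_succ]
    rw [Matrix.SpecialLinearGroup.coe_mul, hAd] at h00
    simp [genB, Matrix.mul_apply, Fin.sum_univ_two, Matrix.one_apply] at h00

lemma coeA : (genA : Matrix (Fin 2) (Fin 2) ℂ) = !![Complex.I,0;0,-Complex.I] := rfl
lemma coeB : (genB : Matrix (Fin 2) (Fin 2) ℂ) = !![0,Complex.I;Complex.I,0] := rfl

lemma stabA : stabilizesIσ genA := by
  constructor
  · refine ⟨-1, by norm_num, ?_⟩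
    rw [mul_one, smul_one_fin_two, coeA, tfin, Matrix.mul_fin_two]
    norm_num [Complex.I_mul_I]
  · refine ⟨1, one_ne_zero, ?_⟩
    rw [sigmaMat, smul_sigma, coeA, tfin, Matrix.mul_fin_two, Matrix.mul_fin_two]
    norm_num [Complex.I_mul_I]

lemma stabB : stabilizesIσ genB := by
  constructor
  · refine ⟨-1, by norm_num, ?_⟩
    rw [mul_one, smul_one_fin_two, coeB, tfin, Matrix.mul_fin_two]
    norm_num [Complex.I_mul_I]
  · refine ⟨-1, by norm_num, ?_⟩
    rw [sigmaMat, smul_sigma, coeB, tfin, Matrix.mul_fin_two, Matrix.mul_fin_two]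
    norm_num [Complex.I_mul_I]

/-- **Statement 18.** The stabilizer of `([I],[σ]) ∈ ℙ² × ℙ²` in `SL(2,ℂ)` is the subgroup of
order 8 generated by `[[i,0],[0,−i]]` and `[[0,i],[i,0]]`; it is isomorphic to the quaternion
group `Q₈` (the binary dihedral group of order 8). -/
theorem stabilizer_of_I_and_sigma :
    (∀ g : Matrix.SpecialLinearGroup (Fin 2) ℂ,
      stabilizesIσ g ↔ g ∈ Subgroup.closure {genA, genB}) ∧
    Nat.card (Subgroup.closure {genA, genB} :
      Subgroup (Matrix.SpecialLinearGroup (Fin 2) ℂ)) = 8 ∧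
    Nonempty (QuaternionGroup 2 ≃*
      (Subgroup.closure {genA, genB} : Subgroup (Matrix.SpecialLinearGroup (Fin 2) ℂ))) := by
  have hsub : Hgrp ≤ stabSG := by
    rw [Hgrp, Subgroup.closure_le]
    rintro x hx
    rcases hx with rfl | rfl
    · exact stabA
    · exact stabB
  have stab_mem : ∀ g : Matrix.SpecialLinearGroup (Fin 2) ℂ, stabilizesIσ g → g ∈ Hgrp := by
    intro g h
    rcases classify g h with h | h | h | h | h | h | h | h
    · rw [show g = 1 from Subtype.ext (h.trans Matrix.one_fin_two.symm)]
      exact one_mem _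
    · rw [show g = genA ^ 2 from Subtype.ext (h.trans W2.symm)]
      exact pow_mem memA 2
    · rw [show g = genA from Subtype.ext (h.trans coeA.symm)]
      exact memA
    · rw [show g = genA ^ 3 from Subtype.ext (h.trans W3.symm)]
      exact pow_mem memA 3
    · rw [show g = genB from Subtype.ext (h.trans coeB.symm)]
      exact memB
    · rw [show g = genB * genA ^ 2 from Subtype.ext (h.trans W5.symm)]
      exact mul_mem memB (pow_mem memA 2)
    · rw [show g = genB * genA from Subtype.ext (h.trans W6.symm)]
      exact mul_mem memB memA
    · rw [show g = genB * genA ^ 3 from Subtype.ext (h.trans W7.symm)]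
      exact mul_mem memB (pow_mem memA 3)
  have hsurj : Function.Surjective qhom := by
    rintro ⟨g, hg⟩
    have hstab : stabilizesIσ g := hsub hg
    rcases classify g hstab with h | h | h | h | h | h | h | h
    · refine ⟨.a 0, Subtype.ext (Subtype.ext ?_)⟩
      show ((genA ^ (0 : ZMod (2*2)).val : Matrix.SpecialLinearGroup (Fin 2) ℂ) :
        Matrix (Fin 2) (Fin 2) ℂ) = _
      rw [h, show (0 : ZMod (2*2)).val = 0 from rfl, pow_zero]
      exact Matrix.one_fin_two
    · refine ⟨.a 2, Subtype.ext (Subtype.ext ?_)⟩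
      show ((genA ^ (2 : ZMod (2*2)).val : Matrix.SpecialLinearGroup (Fin 2) ℂ) :
        Matrix (Fin 2) (Fin 2) ℂ) = _
      rw [h, show (2 : ZMod (2*2)).val = 2 from rfl]
      exact W2
    · refine ⟨.a 1, Subtype.ext (Subtype.ext ?_)⟩
      show ((genA ^ (1 : ZMod (2*2)).val : Matrix.SpecialLinearGroup (Fin 2) ℂ) :
        Matrix (Fin 2) (Fin 2) ℂ) = _
      rw [h, show (1 : ZMod (2*2)).val = 1 from rfl, pow_one]
      exact coeA
    · refine ⟨.a 3, Subtype.ext (Subtype.ext ?_)⟩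
      show ((genA ^ (3 : ZMod (2*2)).val : Matrix.SpecialLinearGroup (Fin 2) ℂ) :
        Matrix (Fin 2) (Fin 2) ℂ) = _
      rw [h, show (3 : ZMod (2*2)).val = 3 from rfl]
      exact W3
    · refine ⟨.xa 0, Subtype.ext (Subtype.ext ?_)⟩
      show ((genB * genA ^ (0 : ZMod (2*2)).val : Matrix.SpecialLinearGroup (Fin 2) ℂ) :
        Matrix (Fin 2) (Fin 2) ℂ) = _
      rw [h, show (0 : ZMod (2*2)).val = 0 from rfl, pow_zero, mul_one]
      exact coeB
    · refine ⟨.xa 2, Subtype.ext (Subtype.ext ?_)⟩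
      show ((genB * genA ^ (2 : ZMod (2*2)).val : Matrix.SpecialLinearGroup (Fin 2) ℂ) :
        Matrix (Fin 2) (Fin 2) ℂ) = _
      rw [h, show (2 : ZMod (2*2)).val = 2 from rfl]
      exact W5
    · refine ⟨.xa 1, Subtype.ext (Subtype.ext ?_)⟩
      show ((genB * genA ^ (1 : ZMod (2*2)).val : Matrix.SpecialLinearGroup (Fin 2) ℂ) :
        Matrix (Fin 2) (Fin 2) ℂ) = _
      rw [h, show (1 : ZMod (2*2)).val = 1 from rfl, pow_one]
      exact W6
    · refine ⟨.xa 3, Subtype.ext (Subtype.ext ?_)⟩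
      show ((genB * genA ^ (3 : ZMod (2*2)).val : Matrix.SpecialLinearGroup (Fin 2) ℂ) :
        Matrix (Fin 2) (Fin 2) ℂ) = _
      rw [h, show (3 : ZMod (2*2)).val = 3 from rfl]
      exact W7
  have e : QuaternionGroup 2 ≃* Hgrp := MulEquiv.ofBijective qhom ⟨qhom_inj, hsurj⟩
  have hcard : Nat.card Hgrp = 8 := by
    rw [← Nat.card_congr e.toEquiv, Nat.card_eq_fintype_card, QuaternionGroup.card]
  exact ⟨fun g => ⟨fun h => stab_mem g h, fun hg => hsub hg⟩, hcard, ⟨e⟩⟩
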